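/- arXiv:1111.2800 — 4 statements merged into one kernel-verified Lean document; each statement's English description precedes it below -/
import Mathlib

section
/- Let μ be a probability measure on the unit circle S¹ ⊂ ℝ² that is invariant under the maps z ↦ i·z and z ↦ conj(z). Then ∫∫ ⟨z₁, z₂⟩^4 dμ(z₁) dμ(z₂) = 3/8 + (1/8)·μ̂(4)², where ⟨·,·⟩ is the Euclidean inner product on ℝ² and μ̂(4) = ∫ z^(-4) dμ(z) (viewing points of S¹ as complex numbers). -/
open MeasureTheory

lemma circle_key (z₁ z₂ : ℂ) (h1 : ‖z₁‖ = 1) (h2 : ‖z₂‖ = 1) :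
    (z₁ * (starRingEnd ℂ) z₂).re ^ 4 =
      3 / 8 + 1 / 2 * (z₁ ^ 2 * (starRingEnd ℂ) (z₂ ^ 2)).re
        + 1 / 8 * (z₁ ^ 4 * (starRingEnd ℂ) (z₂ ^ 4)).re := by
  set w := z₁ * (starRingEnd ℂ) z₂ with hw
  have habs : ‖w‖ = 1 := by
    simp [hw, map_mul, h1, h2]
  have hn : w.re ^ 2 + w.im ^ 2 = 1 := by
    have := Complex.sq_norm w
    rw [habs] at this
    simpa [Complex.normSq_apply, pow_two] using this.symm
  have e2 : z₁ ^ 2 * (starRingEnd ℂ) (z₂ ^ 2) = w ^ 2 := by rw [hw, map_pow]; ring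
  have e4 : z₁ ^ 4 * (starRingEnd ℂ) (z₂ ^ 4) = w ^ 4 := by rw [hw, map_pow]; ring
  rw [e2, e4]
  simp only [pow_succ, pow_zero, one_mul, Complex.mul_re, Complex.mul_im]
  linear_combination (7 / 8 * w.re ^ 2 - 1 / 8 * w.im ^ 2 + 3 / 8) * hn

lemma my_integral_re {μ : Measure ℂ} {f : ℂ → ℂ} (hf : Integrable f μ) :
    ∫ z, (f z).re ∂μ = (∫ z, f z ∂μ).re := by
  have h := integral_re hf
  simpa [RCLike.re_eq_complex_re] using h

/-- Identifying the unit circle `S¹ ⊂ ℝ²` with the unit circle in `ℂ`, the Euclidean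
inner product of two points is `⟨z₁, z₂⟩ = Re(z₁ * conj z₂)`. -/
theorem fourth_moment_of_cosine
    (μ : Measure ℂ) [IsProbabilityMeasure μ]
    (hsupp : μ {z : ℂ | ‖z‖ = 1}ᶜ = 0)
    (hrot : μ.map (fun z => Complex.I * z) = μ)
    (hconj : μ.map (fun z => (starRingEnd ℂ) z) = μ) :
    (∫ z₁, ∫ z₂, (z₁ * (starRingEnd ℂ) z₂).re ^ 4 ∂μ ∂μ) =
      3 / 8 + 1 / 8 * (∫ z, z ^ (-4 : ℤ) ∂μ).re ^ 2 := by
  have hae : ∀ᵐ z ∂μ, ‖z‖ = 1 := by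
    rw [ae_iff]
    exact hsupp
  -- integrability helper
  have intH : ∀ g : ℂ → ℂ, Continuous g → (∀ z : ℂ, ‖z‖ = 1 → ‖g z‖ ≤ 1) →
      Integrable g μ := by
    intro g hg hb
    refine (integrable_const (1 : ℝ)).mono' hg.aestronglyMeasurable ?_
    filter_upwards [hae] with z hz
    simpa using hb z hz
  have intPow : ∀ k : ℕ, Integrable (fun z : ℂ => z ^ k) μ := fun k =>
    intH _ (continuous_pow k) (fun z hz => by
      simp [map_pow, hz])
  -- second moment vanishes by rotation invariance
  have hA : (∫ z, z ^ 2 ∂μ) = 0 := by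
    have h : (∫ z, z ^ 2 ∂μ) = - ∫ z, z ^ 2 ∂μ := by
      conv_lhs => rw [← hrot]
      rw [integral_map (by fun_prop) ((continuous_pow 2).aestronglyMeasurable)]
      rw [show (fun z : ℂ => (Complex.I * z) ^ 2) = fun z : ℂ => -(z ^ 2) by
        funext z; rw [mul_pow, Complex.I_sq]; ring]
      exact integral_neg _
    linear_combination h / 2
  set B := ∫ z, z ^ 4 ∂μ with hBdef
  -- B is real by conjugation invariance
  have h4 : (∫ z, z ^ 4 ∂μ) = ∫ z, (starRingEnd ℂ) (z ^ 4) ∂μ := by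
    conv_lhs => rw [← hconj]
    rw [integral_map (Complex.continuous_conj.aemeasurable)
      ((continuous_pow 4).aestronglyMeasurable)]
    congr 1
    funext z
    rw [map_pow]
  have hBconj : (starRingEnd ℂ) B = B := by
    rw [hBdef]
    conv_rhs => rw [h4]
    rw [integral_conj]
  have hBim : B.im = 0 := by
    have := congrArg Complex.im hBconj
    simp only [Complex.conj_im] at this
    linarith
  -- the Fourier coefficient equals B
  have hμ4 : (∫ z, z ^ (-4 : ℤ) ∂μ) = B := by
    have h : (∫ z, z ^ (-4 : ℤ) ∂μ) = ∫ z, (starRingEnd ℂ) (z ^ 4) ∂μ := by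
      refine integral_congr_ae ?_
      filter_upwards [hae] with z hz
      have hinv : z⁻¹ = (starRingEnd ℂ) z := by
        rw [Complex.inv_def]
        have hns : Complex.normSq z = 1 := by
          have := Complex.sq_norm z; rw [hz] at this; simpa using this.symm
        rw [hns]
        simp
      rw [zpow_neg, show ((4 : ℤ) : ℤ) = ((4 : ℕ) : ℤ) by norm_num, zpow_natCast,
        ← inv_pow, hinv, map_pow]
    rw [h, integral_conj, ← hBdef, hBconj]
  -- inner integral computation
  have hinner : ∀ᵐ z₁ ∂μ, (∫ z₂, (z₁ * (starRingEnd ℂ) z₂).re ^ 4 ∂μ)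
      = 3 / 8 + 1 / 8 * (z₁ ^ 4 * (starRingEnd ℂ) B).re := by
    filter_upwards [hae] with z₁ h1
    have step1 : (∫ z₂, (z₁ * (starRingEnd ℂ) z₂).re ^ 4 ∂μ)
        = ∫ z₂, (3 / 8 + 1 / 2 * (z₁ ^ 2 * (starRingEnd ℂ) (z₂ ^ 2)).re
            + 1 / 8 * (z₁ ^ 4 * (starRingEnd ℂ) (z₂ ^ 4)).re) ∂μ := by
      refine integral_congr_ae ?_
      filter_upwards [hae] with z₂ h2
      exact circle_key z₁ z₂ h1 h2
    have intk : ∀ k : ℕ, Integrable (fun z₂ : ℂ => z₁ ^ k * (starRingEnd ℂ) (z₂ ^ k)) μ := by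
      intro k
      refine intH _ (continuous_const.mul (Complex.continuous_conj.comp (continuous_pow k))) ?_
      intro z hz
      simp [map_mul, map_pow, Complex.norm_conj, h1, hz]
    have key2 : (∫ z₂, (z₁ ^ 2 * (starRingEnd ℂ) (z₂ ^ 2)).re ∂μ)
        = (z₁ ^ 2 * (starRingEnd ℂ) (∫ z, z ^ 2 ∂μ)).re := by
      rw [my_integral_re (intk 2), integral_const_mul, integral_conj]
    have key4 : (∫ z₂, (z₁ ^ 4 * (starRingEnd ℂ) (z₂ ^ 4)).re ∂μ)
        = (z₁ ^ 4 * (starRingEnd ℂ) B).re := by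
      rw [my_integral_re (intk 4), integral_const_mul, integral_conj, hBdef]
    rw [step1, integral_add, integral_add, integral_const, integral_const_mul,
      integral_const_mul, key2, key4, hA]
    · simp
    · exact integrable_const _
    · exact ((intk 2).re.const_mul _)
    · exact ((integrable_const _).add ((intk 2).re.const_mul _))
    · exact ((intk 4).re.const_mul _)
  -- outer integral
  have intOuter : Integrable (fun z₁ : ℂ => z₁ ^ 4 * (starRingEnd ℂ) B) μ :=
    (intPow 4).mul_const _
  have keyOuter : (∫ z₁, (z₁ ^ 4 * (starRingEnd ℂ) B).re ∂μ)
      = (B * (starRingEnd ℂ) B).re := by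
    rw [my_integral_re intOuter, integral_mul_const, ← hBdef]
  have intOuterRe : Integrable (fun z₁ : ℂ => (z₁ ^ 4 * (starRingEnd ℂ) B).re) μ :=
    intOuter.re
  rw [integral_congr_ae hinner,
    integral_add (integrable_const _) (intOuterRe.const_mul _),
    integral_const, integral_const_mul, keyOuter, hμ4]
  have hre : (B * (starRingEnd ℂ) B).re = B.re ^ 2 := by
    rw [Complex.mul_re]
    simp only [Complex.conj_re, Complex.conj_im, hBim]
    ring
  rw [hre]
  simp
end

section
/- Let n be a positive integer and Λ_n = {λ ∈ ℤ² : ‖λ‖² = n}, with N = |Λ_n| > 0. If (λ₁, λ₂, λ₃, λ₄) ∈ Λ_n⁴ satisfies λ₁ + λ₂ + λ₃ + λ₄ = 0, then λ₁ = −λ₂ and λ₃ = −λ₄, or λ₁ = −λ₃ and λ₂ = −λ₄, or λ₁ = −λ₄ and λ₂ = −λ₃. -/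
set_option maxHeartbeats 800000 in
private lemma gauss_norm_aux (x1 x2 : ℤ) (m : ℤ) (h : x1 ^ 2 + x2 ^ 2 = m) :
    (⟨x1, x2⟩ : ℤ√(-1)) * star (⟨x1, x2⟩ : ℤ√(-1)) = (m : ℤ√(-1)) := by
  ext
  · simp [Zsqrtd.re_mul, Zsqrtd.re_star, Zsqrtd.im_star]
    linear_combination h
  · simp [Zsqrtd.im_mul, Zsqrtd.re_star, Zsqrtd.im_star]
    ring

set_option maxHeartbeats 800000 in
theorem four_correlation_structure (n : ℕ) (hn : 0 < n)
    (l₁ l₂ l₃ l₄ : ℤ × ℤ)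
    (h₁ : l₁.1 ^ 2 + l₁.2 ^ 2 = (n : ℤ))
    (h₂ : l₂.1 ^ 2 + l₂.2 ^ 2 = (n : ℤ))
    (h₃ : l₃.1 ^ 2 + l₃.2 ^ 2 = (n : ℤ))
    (h₄ : l₄.1 ^ 2 + l₄.2 ^ 2 = (n : ℤ))
    (hsum : l₁ + l₂ + l₃ + l₄ = 0) :
    (l₁ = -l₂ ∧ l₃ = -l₄) ∨ (l₁ = -l₃ ∧ l₂ = -l₄) ∨ (l₁ = -l₄ ∧ l₂ = -l₃) := by
  obtain ⟨a1, a2⟩ := l₁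
  obtain ⟨b1, b2⟩ := l₂
  obtain ⟨c1, c2⟩ := l₃
  obtain ⟨d1, d2⟩ := l₄
  simp only at h₁ h₂ h₃ h₄
  have hs1 : a1 + b1 + c1 + d1 = 0 := by
    have := congrArg Prod.fst hsum; simpa using this
  have hs2 : a2 + b2 + c2 + d2 = 0 := by
    have := congrArg Prod.snd hsum; simpa using this
  set A : ℤ√(-1) := ⟨a1, a2⟩ with hA
  set B : ℤ√(-1) := ⟨b1, b2⟩ with hB
  set C : ℤ√(-1) := ⟨c1, c2⟩ with hC
  set D : ℤ√(-1) := ⟨d1, d2⟩ with hD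
  have HA : A + B + C + D = 0 := by
    ext <;> simp [hA, hB, hC, hD, Zsqrtd.re_add, Zsqrtd.im_add] <;> linarith
  have Hstar : star A + star B + star C + star D = 0 := by
    have := congrArg star HA
    simpa [star_add] using this
  have HnA : A * star A = ((n : ℤ) : ℤ√(-1)) := by
    rw [hA]; exact gauss_norm_aux _ _ _ h₁
  have HnB : B * star B = ((n : ℤ) : ℤ√(-1)) := by
    rw [hB]; exact gauss_norm_aux _ _ _ h₂
  have HnC : C * star C = ((n : ℤ) : ℤ√(-1)) := by
    rw [hC]; exact gauss_norm_aux _ _ _ h₃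
  have HnD : D * star D = ((n : ℤ) : ℤ√(-1)) := by
    rw [hD]; exact gauss_norm_aux _ _ _ h₄
  have key : ((n : ℤ) : ℤ√(-1)) * (A*B*C + A*B*D + A*C*D + B*C*D) = 0 := by
    linear_combination (-(B*C*D)) * HnA + (-(A*C*D)) * HnB + (-(A*B*D)) * HnC
      + (-(A*B*C)) * HnD + (A*B*C*D) * Hstar
  have hne : ((n : ℤ) : ℤ√(-1)) ≠ 0 := by
    intro h
    have := congrArg Zsqrtd.re h
    simp at this
    omega
  have he3 : A*B*C + A*B*D + A*C*D + B*C*D = 0 := by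
    rcases mul_eq_zero.mp key with h | h
    · exact absurd h hne
    · exact h
  have hfac : (A + B) * ((A + C) * (A + D)) = 0 := by
    linear_combination he3 + A^2 * HA
  have coordeq : ∀ x1 x2 y1 y2 : ℤ,
      (⟨x1, x2⟩ : ℤ√(-1)) + ⟨y1, y2⟩ = 0 → x1 + y1 = 0 ∧ x2 + y2 = 0 := by
    intro x1 x2 y1 y2 h
    constructor
    · have := congrArg Zsqrtd.re h; simpa using this
    · have := congrArg Zsqrtd.im h; simpa using this
  rcases mul_eq_zero.mp hfac with h | h
  · obtain ⟨e1, e2⟩ := coordeq _ _ _ _ h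
    left
    constructor <;> (apply Prod.ext <;> simp <;> omega)
  · rcases mul_eq_zero.mp h with h' | h'
    · obtain ⟨e1, e2⟩ := coordeq _ _ _ _ h'
      right; left
      constructor <;> (apply Prod.ext <;> simp <;> omega)
    · obtain ⟨e1, e2⟩ := coordeq _ _ _ _ h'
      right; right
      constructor <;> (apply Prod.ext <;> simp <;> omega)
end

section
/- Let Λ_n = {λ ∈ ℤ² : ‖λ‖² = n} with N = |Λ_n|. Then the number of 4-tuples (λ₁, λ₂, λ₃, λ₄) ∈ Λ_n⁴ with λ₁ + λ₂ + λ₃ + λ₄ = 0 equals 3N² + O(N); in particular it is at most 3N². -/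
/-- The set of lattice points on the circle of radius `√n`. -/
noncomputable def Lam (n : ℕ) : Finset (ℤ × ℤ) :=
  (Finset.Icc (-(n : ℤ), -(n : ℤ)) ((n : ℤ), (n : ℤ))).filter
    (fun l => l.1 ^ 2 + l.2 ^ 2 = (n : ℤ))

/-- The set of 4-tuples of lattice points on the circle of radius `√n` summing to zero. -/
noncomputable def S4 (n : ℕ) : Finset ((ℤ × ℤ) × (ℤ × ℤ) × (ℤ × ℤ) × (ℤ × ℤ)) :=
  (Lam n ×ˢ Lam n ×ˢ Lam n ×ˢ Lam n).filter
    (fun t => t.1 + t.2.1 + t.2.2.1 + t.2.2.2 = 0)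

lemma mem_Lam {n : ℕ} {l : ℤ × ℤ} : l ∈ Lam n ↔ l.1 ^ 2 + l.2 ^ 2 = (n : ℤ) := by
  constructor
  · intro h
    exact (Finset.mem_filter.mp h).2
  · intro h
    refine Finset.mem_filter.mpr ⟨?_, h⟩
    rw [Finset.mem_Icc]
    constructor <;> constructor <;> simp only [Prod.fst, Prod.snd] <;>
      nlinarith [mul_self_nonneg (l.1 + 1), mul_self_nonneg (l.1 - 1),
        mul_self_nonneg (l.2 + 1), mul_self_nonneg (l.2 - 1), sq_nonneg l.1, sq_nonneg l.2]

lemma neg_mem_Lam {n : ℕ} {l : ℤ × ℤ} (h : l ∈ Lam n) : -l ∈ Lam n := by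
  rw [mem_Lam] at h ⊢
  simpa using by linarith [h]

/-- The factorization lemma in Gaussian integers. -/
lemma gauss_pair {n : ℤ} (hn : n ≠ 0) {a b c d : GaussianInt}
    (ha : a.norm = n) (hb : b.norm = n) (hc : c.norm = n) (hd : d.norm = n)
    (h : a + b + c + d = 0) :
    (a + b = 0 ∧ c + d = 0) ∨ (a + c = 0 ∧ b + d = 0) ∨ (a + d = 0 ∧ b + c = 0) := by
  have ha' : (n : GaussianInt) = a * star a := by rw [← ha]; exact Zsqrtd.norm_eq_mul_conj a
  have hb' : (n : GaussianInt) = b * star b := by rw [← hb]; exact Zsqrtd.norm_eq_mul_conj b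
  have hc' : (n : GaussianInt) = c * star c := by rw [← hc]; exact Zsqrtd.norm_eq_mul_conj c
  have hd' : (n : GaussianInt) = d * star d := by rw [← hd]; exact Zsqrtd.norm_eq_mul_conj d
  have hstar : star a + star b + star c + star d = 0 := by
    have := congrArg star h
    simpa using this
  have key : (n : GaussianInt) * (b*c*d + a*c*d + a*b*d + a*b*c) = 0 := by
    linear_combination (b*c*d) * ha' + (a*c*d) * hb' + (a*b*d) * hc' + (a*b*c) * hd' +
      (a*b*c*d) * hstar
  have hn' : (n : GaussianInt) ≠ 0 := by
    intro h0
    apply hn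
    exact_mod_cast h0
  have he3 : b*c*d + a*c*d + a*b*d + a*b*c = 0 := by
    rcases mul_eq_zero.mp key with h' | h'
    · exact absurd h' hn'
    · exact h'
  have hfac : (a + b) * ((a + c) * (a + d)) = 0 := by
    linear_combination he3 + a^2 * h
  rcases mul_eq_zero.mp hfac with h1 | h1
  · exact Or.inl ⟨h1, by linear_combination h - h1⟩
  rcases mul_eq_zero.mp h1 with h2 | h2
  · exact Or.inr (Or.inl ⟨h2, by linear_combination h - h2⟩)
  · exact Or.inr (Or.inr ⟨h2, by linear_combination h - h2⟩)

/-- The embedding of `ℤ × ℤ` into the Gaussian integers. -/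
def gz (l : ℤ × ℤ) : GaussianInt := ⟨l.1, l.2⟩

lemma gz_norm {n : ℕ} {l : ℤ × ℤ} (h : l.1 ^ 2 + l.2 ^ 2 = (n : ℤ)) : (gz l).norm = n := by
  simp [gz, Zsqrtd.norm]; linarith [h, sq l.1, sq l.2]

lemma gz_add_eq_zero {x y : ℤ × ℤ} (h : gz x + gz y = 0) : y = -x := by
  have h1 : x.1 + y.1 = 0 := congrArg Zsqrtd.re h
  have h2 : x.2 + y.2 = 0 := congrArg Zsqrtd.im h
  have : y = (-x.1, -x.2) := Prod.ext (by simp; linarith) (by simp; linarith)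
  simpa [Prod.ext_iff] using this

/-- Any zero-sum quadruple on the circle consists of two antipodal pairs. -/
lemma pairing {n : ℕ} {a b c d : ℤ × ℤ}
    (ha : a.1 ^ 2 + a.2 ^ 2 = (n : ℤ)) (hb : b.1 ^ 2 + b.2 ^ 2 = (n : ℤ))
    (hc : c.1 ^ 2 + c.2 ^ 2 = (n : ℤ)) (hd : d.1 ^ 2 + d.2 ^ 2 = (n : ℤ))
    (h : a + b + c + d = 0) :
    (b = -a ∧ d = -c) ∨ (c = -a ∧ d = -b) ∨ (d = -a ∧ c = -b) := by
  rcases eq_or_ne (n : ℤ) 0 with hn | hn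
  · rw [hn] at ha hb hc hd
    have za1 : a.1 = 0 := by nlinarith [sq_nonneg a.1, sq_nonneg a.2]
    have za2 : a.2 = 0 := by nlinarith [sq_nonneg a.1, sq_nonneg a.2]
    have zb1 : b.1 = 0 := by nlinarith [sq_nonneg b.1, sq_nonneg b.2]
    have zb2 : b.2 = 0 := by nlinarith [sq_nonneg b.1, sq_nonneg b.2]
    have zc1 : c.1 = 0 := by nlinarith [sq_nonneg c.1, sq_nonneg c.2]
    have zc2 : c.2 = 0 := by nlinarith [sq_nonneg c.1, sq_nonneg c.2]
    have zd1 : d.1 = 0 := by nlinarith [sq_nonneg d.1, sq_nonneg d.2]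
    have zd2 : d.2 = 0 := by nlinarith [sq_nonneg d.1, sq_nonneg d.2]
    left
    constructor
    · have : b = (-a.1, -a.2) := Prod.ext (by simp [za1, zb1]) (by simp [za2, zb2])
      simpa [Prod.ext_iff] using this
    · have : d = (-c.1, -c.2) := Prod.ext (by simp [zc1, zd1]) (by simp [zc2, zd2])
      simpa [Prod.ext_iff] using this
  · have h1 : a.1 + b.1 + c.1 + d.1 = 0 := by
      have := congrArg Prod.fst h; simpa using this
    have h2 : a.2 + b.2 + c.2 + d.2 = 0 := by
      have := congrArg Prod.snd h; simpa using this
    have hg : gz a + gz b + gz c + gz d = 0 := by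
      refine Zsqrtd.ext ?_ ?_ <;> simpa [gz] using (by assumption)
    rcases gauss_pair hn (gz_norm ha) (gz_norm hb) (gz_norm hc) (gz_norm hd) hg with
      ⟨p, q⟩ | ⟨p, q⟩ | ⟨p, q⟩
    · exact Or.inl ⟨gz_add_eq_zero p, gz_add_eq_zero q⟩
    · exact Or.inr (Or.inl ⟨gz_add_eq_zero p, gz_add_eq_zero q⟩)
    · exact Or.inr (Or.inr ⟨gz_add_eq_zero p, gz_add_eq_zero q⟩)

/-- Tuples of the form `(a, -a, c, -c)`. -/
noncomputable def T1 (n : ℕ) : Finset ((ℤ × ℤ) × (ℤ × ℤ) × (ℤ × ℤ) × (ℤ × ℤ)) :=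
  (Lam n ×ˢ Lam n).image (fun p => (p.1, -p.1, p.2, -p.2))

/-- Tuples of the form `(a, b, -a, -b)`. -/
noncomputable def T2 (n : ℕ) : Finset ((ℤ × ℤ) × (ℤ × ℤ) × (ℤ × ℤ) × (ℤ × ℤ)) :=
  (Lam n ×ˢ Lam n).image (fun p => (p.1, p.2, -p.1, -p.2))

/-- Tuples of the form `(a, b, -b, -a)`. -/
noncomputable def T3 (n : ℕ) : Finset ((ℤ × ℤ) × (ℤ × ℤ) × (ℤ × ℤ) × (ℤ × ℤ)) :=
  (Lam n ×ˢ Lam n).image (fun p => (p.1, p.2, -p.2, -p.1))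

lemma card_T1 (n : ℕ) : (T1 n).card = (Lam n).card ^ 2 := by
  rw [T1, Finset.card_image_of_injective, Finset.card_product, sq]
  intro p q hpq
  simp only [Prod.mk.injEq] at hpq
  exact Prod.ext hpq.1 hpq.2.2.1

lemma card_T2 (n : ℕ) : (T2 n).card = (Lam n).card ^ 2 := by
  rw [T2, Finset.card_image_of_injective, Finset.card_product, sq]
  intro p q hpq
  simp only [Prod.mk.injEq] at hpq
  exact Prod.ext hpq.1 hpq.2.1

lemma card_T3 (n : ℕ) : (T3 n).card = (Lam n).card ^ 2 := by
  rw [T3, Finset.card_image_of_injective, Finset.card_product, sq]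
  intro p q hpq
  simp only [Prod.mk.injEq] at hpq
  exact Prod.ext hpq.1 hpq.2.1

lemma mem_S4 {n : ℕ} {t : (ℤ × ℤ) × (ℤ × ℤ) × (ℤ × ℤ) × (ℤ × ℤ)} :
    t ∈ S4 n ↔ (t.1 ∈ Lam n ∧ t.2.1 ∈ Lam n ∧ t.2.2.1 ∈ Lam n ∧ t.2.2.2 ∈ Lam n) ∧
      t.1 + t.2.1 + t.2.2.1 + t.2.2.2 = 0 := by
  simp [S4, Finset.mem_filter, Finset.mem_product, and_assoc]

lemma S4_subset_union (n : ℕ) : S4 n ⊆ T1 n ∪ T2 n ∪ T3 n := by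
  intro t ht
  obtain ⟨⟨ha, hb, hc, hd⟩, hsum⟩ := mem_S4.mp ht
  obtain ⟨a, b, c, d⟩ := t
  simp only at ha hb hc hd hsum
  have key := pairing (mem_Lam.mp ha) (mem_Lam.mp hb) (mem_Lam.mp hc) (mem_Lam.mp hd) hsum
  simp only [Finset.mem_union, T1, T2, T3, Finset.mem_image, Finset.mem_product]
  rcases key with ⟨p, q⟩ | ⟨p, q⟩ | ⟨p, q⟩
  · exact Or.inl (Or.inl ⟨(a, c), ⟨ha, hc⟩, by simp [p, q]⟩)
  · exact Or.inl (Or.inr ⟨(a, b), ⟨ha, hb⟩, by simp [p, q]⟩)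
  · exact Or.inr ⟨(a, b), ⟨ha, hb⟩, by simp [p, q]⟩

lemma T1_subset (n : ℕ) : T1 n ⊆ S4 n := by
  intro t ht
  obtain ⟨p, hp, rfl⟩ := Finset.mem_image.mp ht
  obtain ⟨hp1, hp2⟩ := Finset.mem_product.mp hp
  exact mem_S4.mpr ⟨⟨hp1, neg_mem_Lam hp1, hp2, neg_mem_Lam hp2⟩, by dsimp only; abel⟩

lemma T2_subset (n : ℕ) : T2 n ⊆ S4 n := by
  intro t ht
  obtain ⟨p, hp, rfl⟩ := Finset.mem_image.mp ht
  obtain ⟨hp1, hp2⟩ := Finset.mem_product.mp hp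
  exact mem_S4.mpr ⟨⟨hp1, hp2, neg_mem_Lam hp1, neg_mem_Lam hp2⟩, by dsimp only; abel⟩

lemma T3_subset (n : ℕ) : T3 n ⊆ S4 n := by
  intro t ht
  obtain ⟨p, hp, rfl⟩ := Finset.mem_image.mp ht
  obtain ⟨hp1, hp2⟩ := Finset.mem_product.mp hp
  exact mem_S4.mpr ⟨⟨hp1, hp2, neg_mem_Lam hp2, neg_mem_Lam hp1⟩, by dsimp only; abel⟩

lemma inter_12 (n : ℕ) : T1 n ∩ T2 n ⊆ (Lam n).image (fun a => (a, -a, -a, a)) := by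
  intro t ht
  obtain ⟨h1, h2⟩ := Finset.mem_inter.mp ht
  obtain ⟨p, hp, rfl⟩ := Finset.mem_image.mp h1
  obtain ⟨q, hq, hqt⟩ := Finset.mem_image.mp h2
  simp only [Prod.mk.injEq] at hqt
  obtain ⟨e1, e2, e3, e4⟩ := hqt
  refine Finset.mem_image.mpr ⟨p.1, (Finset.mem_product.mp hp).1, ?_⟩
  have hq2 : q.2 = -p.1 := e2
  have hp2 : p.2 = -p.1 := by rw [← e3, e1]
  simp [hp2, hq2]

lemma inter_13 (n : ℕ) : T1 n ∩ T3 n ⊆ (Lam n).image (fun a => (a, -a, a, -a)) := by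
  intro t ht
  obtain ⟨h1, h2⟩ := Finset.mem_inter.mp ht
  obtain ⟨p, hp, rfl⟩ := Finset.mem_image.mp h1
  obtain ⟨q, hq, hqt⟩ := Finset.mem_image.mp h2
  simp only [Prod.mk.injEq] at hqt
  obtain ⟨e1, e2, e3, e4⟩ := hqt
  refine Finset.mem_image.mpr ⟨p.1, (Finset.mem_product.mp hp).1, ?_⟩
  have hp2 : p.2 = p.1 := by
    rw [← neg_injective e4, e1]
  simp [hp2]

lemma inter_23 (n : ℕ) : T2 n ∩ T3 n ⊆ (Lam n).image (fun a => (a, a, -a, -a)) := by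
  intro t ht
  obtain ⟨h1, h2⟩ := Finset.mem_inter.mp ht
  obtain ⟨p, hp, rfl⟩ := Finset.mem_image.mp h1
  obtain ⟨q, hq, hqt⟩ := Finset.mem_image.mp h2
  simp only [Prod.mk.injEq] at hqt
  obtain ⟨e1, e2, e3, e4⟩ := hqt
  refine Finset.mem_image.mpr ⟨p.1, (Finset.mem_product.mp hp).1, ?_⟩
  have hp2 : p.2 = p.1 := by
    rw [← e2]
    exact neg_injective e3
  simp [hp2]

lemma card_bounds (n : ℕ) :
    (S4 n).card ≤ 3 * (Lam n).card ^ 2 ∧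
    3 * (Lam n).card ^ 2 ≤ (S4 n).card + 3 * (Lam n).card := by
  have hub : (S4 n).card ≤ 3 * (Lam n).card ^ 2 := by
    calc (S4 n).card ≤ (T1 n ∪ T2 n ∪ T3 n).card := Finset.card_le_card (S4_subset_union n)
    _ ≤ (T1 n ∪ T2 n).card + (T3 n).card := Finset.card_union_le _ _
    _ ≤ (T1 n).card + (T2 n).card + (T3 n).card := by
        linarith [Finset.card_union_le (T1 n) (T2 n)]
    _ = 3 * (Lam n).card ^ 2 := by rw [card_T1, card_T2, card_T3]; ring
  refine ⟨hub, ?_⟩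
  have hu : T1 n ∪ T2 n ∪ T3 n ⊆ S4 n :=
    Finset.union_subset (Finset.union_subset (T1_subset n) (T2_subset n)) (T3_subset n)
  have e1 : ((T1 n ∪ T2 n) ∪ T3 n).card + ((T1 n ∪ T2 n) ∩ T3 n).card
      = (T1 n ∪ T2 n).card + (T3 n).card := Finset.card_union_add_card_inter _ _
  have e2 : (T1 n ∪ T2 n).card + (T1 n ∩ T2 n).card = (T1 n).card + (T2 n).card :=
    Finset.card_union_add_card_inter _ _
  have i12 : (T1 n ∩ T2 n).card ≤ (Lam n).card :=
    le_trans (Finset.card_le_card (inter_12 n)) (Finset.card_image_le)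
  have i13 : (T1 n ∩ T3 n).card ≤ (Lam n).card :=
    le_trans (Finset.card_le_card (inter_13 n)) (Finset.card_image_le)
  have i23 : (T2 n ∩ T3 n).card ≤ (Lam n).card :=
    le_trans (Finset.card_le_card (inter_23 n)) (Finset.card_image_le)
  have idist : (T1 n ∪ T2 n) ∩ T3 n ⊆ (T1 n ∩ T3 n) ∪ (T2 n ∩ T3 n) := by
    rw [Finset.union_inter_distrib_right]
  have i3 : ((T1 n ∪ T2 n) ∩ T3 n).card ≤ 2 * (Lam n).card := by
    calc ((T1 n ∪ T2 n) ∩ T3 n).card ≤ ((T1 n ∩ T3 n) ∪ (T2 n ∩ T3 n)).card :=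
      Finset.card_le_card idist
    _ ≤ (T1 n ∩ T3 n).card + (T2 n ∩ T3 n).card := Finset.card_union_le _ _
    _ ≤ 2 * (Lam n).card := by omega
  have hlb : ((T1 n ∪ T2 n) ∪ T3 n).card ≤ (S4 n).card := Finset.card_le_card hu
  have c1 := card_T1 n
  have c2 := card_T2 n
  have c3 := card_T3 n
  omega

theorem card_S4_eq_three_N_sq_plus_O_N :
    ∃ C : ℝ, ∀ n : ℕ,
      ((S4 n).card : ℝ) ≤ 3 * ((Lam n).card : ℝ) ^ 2 ∧
      |((S4 n).card : ℝ) - 3 * ((Lam n).card : ℝ) ^ 2| ≤ C * (Lam n).card := by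
  refine ⟨3, fun n => ?_⟩
  obtain ⟨h1, h2⟩ := card_bounds n
  have h1' : ((S4 n).card : ℝ) ≤ 3 * ((Lam n).card : ℝ) ^ 2 := by exact_mod_cast h1
  have h2' : 3 * ((Lam n).card : ℝ) ^ 2 ≤ ((S4 n).card : ℝ) + 3 * ((Lam n).card : ℝ) := by
    exact_mod_cast h2
  refine ⟨h1', ?_⟩
  rw [abs_le]
  constructor <;> linarith
end

section
/- Let Λ_n = {λ ∈ ℤ² : ‖λ‖² = n} with N = |Λ_n|, and let S₆(n) = {(λ₁,…,λ₆) ∈ Λ_n⁶ : λ₁+⋯+λ₆ = 0}. Then |S₆(n)| ≤ 4·N⁴. -/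
/-- The set of 6-tuples of lattice points on the circle of radius `√n` summing to zero. -/
noncomputable def S6 (n : ℕ) : Finset ((ℤ × ℤ) × (ℤ × ℤ) × (ℤ × ℤ) × (ℤ × ℤ) × (ℤ × ℤ) × (ℤ × ℤ)) :=
  (Lam n ×ˢ Lam n ×ˢ Lam n ×ˢ Lam n ×ˢ Lam n ×ˢ Lam n).filter
    (fun t => t.1 + t.2.1 + t.2.2.1 + t.2.2.2.1 + t.2.2.2.2.1 + t.2.2.2.2.2 = 0)

lemma Lam_circle {n : ℕ} {x : ℤ × ℤ} (h : x ∈ Lam n) : x.1 ^ 2 + x.2 ^ 2 = (n : ℤ) :=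
  (Finset.mem_filter.mp h).2

lemma cross_eq_zero {u1 u2 p1 p2 q1 q2 : ℤ} (hu : u1 ≠ 0 ∨ u2 ≠ 0)
    (hp : u1 * p1 + u2 * p2 = 0) (hq : u1 * q1 + u2 * q2 = 0) :
    p1 * q2 - p2 * q1 = 0 := by
  have h1 : u1 * (p1 * q2 - p2 * q1) = 0 := by linear_combination q2 * hp - p2 * hq
  have h2 : u2 * (p1 * q2 - p2 * q1) = 0 := by linear_combination p1 * hq - q1 * hp
  rcases hu with h | h
  · exact (mul_eq_zero.mp h1).resolve_left h
  · exact (mul_eq_zero.mp h2).resolve_left h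

lemma pair_le_N (n : ℕ) (c : ℤ × ℤ) :
    (((Lam n) ×ˢ (Lam n)).filter (fun p => p.1 + p.2 = c)).card ≤ (Lam n).card := by
  apply Finset.card_le_card_of_injOn (fun p => p.1)
  · intro p hp
    exact (Finset.mem_product.mp (Finset.mem_filter.mp hp).1).1
  · intro p hp q hq h
    have hp2 : p.1 + p.2 = c := (Finset.mem_filter.mp hp).2
    have hq2 : q.1 + q.2 = c := (Finset.mem_filter.mp hq).2
    have h' : p.1 = q.1 := h
    rw [← h'] at hq2
    exact Prod.ext h' (add_left_cancel (hp2.trans hq2.symm))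

lemma pair_card_ne (n : ℕ) (c : ℤ × ℤ) (hc : c ≠ 0) :
    (((Lam n) ×ˢ (Lam n)).filter (fun p => p.1 + p.2 = c)).card ≤ 2 := by
  by_contra hlt
  push_neg at hlt
  obtain ⟨p, q, r, hp, hq, hr, hpq, hpr, hqr⟩ := Finset.two_lt_card_iff.mp hlt
  have key : ∀ s ∈ ((Lam n) ×ˢ (Lam n)).filter (fun p => p.1 + p.2 = c),
      s.1.1 ^ 2 + s.1.2 ^ 2 = (n : ℤ) ∧
      2 * c.1 * s.1.1 + 2 * c.2 * s.1.2 = c.1 ^ 2 + c.2 ^ 2 ∧ s.2 = c - s.1 := by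
    intro s hs
    obtain ⟨hmem, hsum⟩ := Finset.mem_filter.mp hs
    obtain ⟨h1, h2⟩ := Finset.mem_product.mp hmem
    have e1 := Lam_circle h1
    have e2 := Lam_circle h2
    have hsum' : s.1 + s.2 = c := hsum
    have hs2 : s.2 = c - s.1 := by rw [← hsum']; ring
    refine ⟨e1, ?_, hs2⟩
    rw [hs2] at e2
    simp only [Prod.fst_sub, Prod.snd_sub] at e2
    linear_combination e1 - e2
  obtain ⟨ex, dx, px⟩ := key p hp
  obtain ⟨ey, dy, py⟩ := key q hq
  obtain ⟨ez, dz, pz⟩ := key r hr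
  have fst_ne : ∀ s t : (ℤ × ℤ) × (ℤ × ℤ), s.2 = c - s.1 → t.2 = c - t.1 → s ≠ t →
      s.1.1 - t.1.1 ≠ 0 ∨ s.1.2 - t.1.2 ≠ 0 := by
    intro s t hs ht hne
    by_contra hcon
    push_neg at hcon
    have h1 : s.1 = t.1 := Prod.ext (by omega) (by omega)
    exact hne (Prod.ext h1 (by rw [hs, ht, h1]))
  have hxy := fst_ne p q px py hpq
  have hxz := fst_ne p r px pz hpr
  have hyz := fst_ne q r py pz hqr
  have hxy2 : (2 * (p.1.1 - q.1.1) ≠ 0) ∨ (2 * (p.1.2 - q.1.2) ≠ 0) := by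
    rcases hxy with h | h
    · exact Or.inl (by omega)
    · exact Or.inr (by omega)
  have hxz2 : (2 * (p.1.1 - r.1.1) ≠ 0) ∨ (2 * (p.1.2 - r.1.2) ≠ 0) := by
    rcases hxz with h | h
    · exact Or.inl (by omega)
    · exact Or.inr (by omega)
  have cross1 : c.1 * (p.1.2 + q.1.2) - c.2 * (p.1.1 + q.1.1) = 0 := by
    apply cross_eq_zero hxy2
    · linear_combination dx - dy
    · linear_combination 2 * ex - 2 * ey
  have cross2 : c.1 * (p.1.2 + r.1.2) - c.2 * (p.1.1 + r.1.1) = 0 := by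
    apply cross_eq_zero hxz2
    · linear_combination dx - dz
    · linear_combination 2 * ex - 2 * ez
  have cw : c.1 * (q.1.2 - r.1.2) - c.2 * (q.1.1 - r.1.1) = 0 := by
    linear_combination cross1 - cross2
  have dw : 2 * c.1 * (q.1.1 - r.1.1) + 2 * c.2 * (q.1.2 - r.1.2) = 0 := by
    linear_combination dy - dz
  have hab : c.1 ^ 2 + c.2 ^ 2 ≠ 0 := by
    intro h
    have h1 : c.1 = 0 := by nlinarith [sq_nonneg c.1, sq_nonneg c.2]
    have h2 : c.2 = 0 := by nlinarith [sq_nonneg c.1, sq_nonneg c.2]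
    exact hc (Prod.ext (by simpa using h1) (by simpa using h2))
  have hw1 : q.1.1 - r.1.1 = 0 := by
    have h0 : (2 * (c.1 ^ 2 + c.2 ^ 2)) * (q.1.1 - r.1.1) = 0 := by
      linear_combination c.1 * dw - 2 * c.2 * cw
    rcases mul_eq_zero.mp h0 with h' | h'
    · omega
    · exact h'
  have hw2 : q.1.2 - r.1.2 = 0 := by
    have h0 : (2 * (c.1 ^ 2 + c.2 ^ 2)) * (q.1.2 - r.1.2) = 0 := by
      linear_combination c.2 * dw + 2 * c.1 * cw
    rcases mul_eq_zero.mp h0 with h' | h'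
    · omega
    · exact h'
  rcases hyz with h | h
  · exact h hw1
  · exact h hw2

lemma fiber_pair_bound (n : ℕ) (c : ℤ × ℤ) :
    (((Lam n) ×ˢ (Lam n)).filter (fun p => p.1 + p.2 = c)).card
      ≤ 2 + if c = 0 then (Lam n).card else 0 := by
  split_ifs with h
  · exact le_trans (pair_le_N n c) (Nat.le_add_left _ _)
  · simpa using pair_card_ne n c h

lemma four_card (n : ℕ) :
    ((Lam n ×ˢ Lam n ×ˢ Lam n ×ˢ Lam n).filter
      (fun y => y.1 + y.2.1 + y.2.2.1 + y.2.2.2 = 0)).card ≤ 3 * (Lam n).card ^ 2 := by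
  classical
  have hmaps : ∀ y ∈ (Lam n ×ˢ Lam n ×ˢ Lam n ×ˢ Lam n).filter
      (fun y => y.1 + y.2.1 + y.2.2.1 + y.2.2.2 = 0),
      (y.1, y.2.1) ∈ Lam n ×ˢ Lam n := by
    intro y hy
    simp only [Finset.mem_filter, Finset.mem_product] at hy
    exact Finset.mem_product.mpr ⟨hy.1.1, hy.1.2.1⟩
  rw [Finset.card_eq_sum_card_fiberwise hmaps]
  have hbound : ∀ z ∈ Lam n ×ˢ Lam n,
      (((Lam n ×ˢ Lam n ×ˢ Lam n ×ˢ Lam n).filter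
        (fun y => y.1 + y.2.1 + y.2.2.1 + y.2.2.2 = 0)).filter
        (fun y => (y.1, y.2.1) = z)).card
        ≤ 2 + if z.1 + z.2 = 0 then (Lam n).card else 0 := by
    intro z _
    have step : (((Lam n ×ˢ Lam n ×ˢ Lam n ×ˢ Lam n).filter
        (fun y => y.1 + y.2.1 + y.2.2.1 + y.2.2.2 = 0)).filter
        (fun y => (y.1, y.2.1) = z)).card
        ≤ (((Lam n) ×ˢ (Lam n)).filter (fun p => p.1 + p.2 = -(z.1 + z.2))).card := by
      apply Finset.card_le_card_of_injOn (fun y => (y.2.2.1, y.2.2.2))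
      · intro y hy
        simp only [Finset.mem_coe, Finset.mem_filter, Finset.mem_product] at hy ⊢
        obtain ⟨⟨⟨m1, m2, m3, m4⟩, hsum⟩, hproj⟩ := hy
        have h1 : y.1 = z.1 := congrArg Prod.fst hproj
        have h2 : y.2.1 = z.2 := congrArg Prod.snd hproj
        exact ⟨⟨m3, m4⟩, by rw [← h1, ← h2]; linear_combination hsum⟩
      · intro y hy y' hy' h
        simp only [Finset.mem_coe, Finset.mem_filter] at hy hy'
        have e1 : (y.1, y.2.1) = (y'.1, y'.2.1) := hy.2.trans hy'.2.symm
        obtain ⟨a1, a2, a3, a4⟩ := y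
        obtain ⟨b1, b2, b3, b4⟩ := y'
        simp only [Prod.mk.injEq] at e1 h ⊢
        exact ⟨e1.1, e1.2, h.1, h.2⟩
    refine le_trans step (le_trans (fiber_pair_bound n _) ?_)
    simp only [neg_eq_zero]
    exact le_rfl
  calc ∑ z ∈ Lam n ×ˢ Lam n,
        (((Lam n ×ˢ Lam n ×ˢ Lam n ×ˢ Lam n).filter
          (fun y => y.1 + y.2.1 + y.2.2.1 + y.2.2.2 = 0)).filter
          (fun y => (y.1, y.2.1) = z)).card
      ≤ ∑ z ∈ Lam n ×ˢ Lam n, (2 + if z.1 + z.2 = 0 then (Lam n).card else 0) :=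
        Finset.sum_le_sum hbound
    _ = 2 * (Lam n).card ^ 2
        + ((Lam n ×ˢ Lam n).filter (fun z => z.1 + z.2 = 0)).card * (Lam n).card := by
        rw [Finset.sum_add_distrib, Finset.sum_const, ← Finset.sum_filter, Finset.sum_const]
        simp [Finset.card_product]
        ring
    _ ≤ 2 * (Lam n).card ^ 2 + (Lam n).card * (Lam n).card := by
        have := pair_le_N n 0
        gcongr
    _ = 3 * (Lam n).card ^ 2 := by ring

theorem card_S6_le_four_N_pow_four (n : ℕ) :
    (S6 n).card ≤ 4 * (Lam n).card ^ 4 := by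
  classical
  rcases le_or_gt (Lam n).card 1 with hN1 | hN2
  · have h1 : (S6 n).card ≤ (Lam n).card ^ 6 := by
      calc (S6 n).card
          ≤ (Lam n ×ˢ Lam n ×ˢ Lam n ×ˢ Lam n ×ˢ Lam n ×ˢ Lam n).card :=
            Finset.card_filter_le _ _
        _ = (Lam n).card ^ 6 := by simp [Finset.card_product]; ring
    have h2 : (Lam n).card = 0 ∨ (Lam n).card = 1 := by omega
    rcases h2 with h | h
    · rw [h] at h1 ⊢; simpa using h1
    · rw [h] at h1 ⊢; norm_num at h1 ⊢; omega
  · have hmaps : ∀ t ∈ S6 n,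
        (t.1, t.2.1, t.2.2.1, t.2.2.2.1) ∈ Lam n ×ˢ Lam n ×ˢ Lam n ×ˢ Lam n := by
      intro t ht
      simp only [S6, Finset.mem_filter, Finset.mem_product] at ht
      simp only [Finset.mem_product]
      exact ⟨ht.1.1, ht.1.2.1, ht.1.2.2.1, ht.1.2.2.2.1⟩
    rw [show (S6 n).card = ∑ y ∈ Lam n ×ˢ Lam n ×ˢ Lam n ×ˢ Lam n,
        ((S6 n).filter (fun t => (t.1, t.2.1, t.2.2.1, t.2.2.2.1) = y)).card from
      Finset.card_eq_sum_card_fiberwise hmaps]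
    have hbound : ∀ y ∈ Lam n ×ˢ Lam n ×ˢ Lam n ×ˢ Lam n,
        ((S6 n).filter (fun t => (t.1, t.2.1, t.2.2.1, t.2.2.2.1) = y)).card
        ≤ 2 + if y.1 + y.2.1 + y.2.2.1 + y.2.2.2 = 0 then (Lam n).card else 0 := by
      intro y _
      have step : ((S6 n).filter (fun t => (t.1, t.2.1, t.2.2.1, t.2.2.2.1) = y)).card
          ≤ (((Lam n) ×ˢ (Lam n)).filter
            (fun p => p.1 + p.2 = -(y.1 + y.2.1 + y.2.2.1 + y.2.2.2))).card := by
        apply Finset.card_le_card_of_injOn (fun t => (t.2.2.2.2.1, t.2.2.2.2.2))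
        · intro t ht
          simp only [Finset.mem_coe, S6, Finset.mem_filter, Finset.mem_product] at ht ⊢
          obtain ⟨hmem, hproj⟩ := ht
          obtain ⟨⟨m1, m2, m3, m4, m5, m6⟩, hsum⟩ := hmem
          have h1 : t.1 = y.1 := congrArg Prod.fst hproj
          have h2 : t.2.1 = y.2.1 := congrArg (fun x => x.2.1) hproj
          have h3 : t.2.2.1 = y.2.2.1 := congrArg (fun x => x.2.2.1) hproj
          have h4 : t.2.2.2.1 = y.2.2.2 := congrArg (fun x => x.2.2.2) hproj
          exact ⟨⟨m5, m6⟩, by rw [← h1, ← h2, ← h3, ← h4]; linear_combination hsum⟩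
        · intro t ht t' ht' h
          simp only [Finset.mem_coe, S6, Finset.mem_filter] at ht ht'
          have e1 : (t.1, t.2.1, t.2.2.1, t.2.2.2.1) = (t'.1, t'.2.1, t'.2.2.1, t'.2.2.2.1) :=
            ht.2.trans ht'.2.symm
          obtain ⟨a1, a2, a3, a4, a5, a6⟩ := t
          obtain ⟨b1, b2, b3, b4, b5, b6⟩ := t'
          simp only [Prod.mk.injEq] at e1 h ⊢
          exact ⟨e1.1, e1.2.1, e1.2.2.1, e1.2.2.2, h.1, h.2⟩
      refine le_trans step (le_trans (fiber_pair_bound n _) ?_)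
      simp only [neg_eq_zero]
      exact le_rfl
    calc ∑ y ∈ Lam n ×ˢ Lam n ×ˢ Lam n ×ˢ Lam n,
          ((S6 n).filter (fun t => (t.1, t.2.1, t.2.2.1, t.2.2.2.1) = y)).card
        ≤ ∑ y ∈ Lam n ×ˢ Lam n ×ˢ Lam n ×ˢ Lam n,
          (2 + if y.1 + y.2.1 + y.2.2.1 + y.2.2.2 = 0 then (Lam n).card else 0) :=
          Finset.sum_le_sum hbound
      _ = 2 * (Lam n).card ^ 4
          + ((Lam n ×ˢ Lam n ×ˢ Lam n ×ˢ Lam n).filter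
            (fun y => y.1 + y.2.1 + y.2.2.1 + y.2.2.2 = 0)).card * (Lam n).card := by
          rw [Finset.sum_add_distrib, Finset.sum_const, ← Finset.sum_filter, Finset.sum_const]
          simp [Finset.card_product]
          ring
      _ ≤ 2 * (Lam n).card ^ 4 + (3 * (Lam n).card ^ 2) * (Lam n).card := by
          have := four_card n
          gcongr
      _ ≤ 2 * (Lam n).card ^ 4 + 2 * (Lam n).card ^ 4 := by
          refine Nat.add_le_add_left ?_ _
          calc 3 * (Lam n).card ^ 2 * (Lam n).card = 3 * (Lam n).card ^ 3 := by ring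
            _ ≤ (2 * (Lam n).card) * (Lam n).card ^ 3 :=
                mul_le_mul_left (by omega) _
            _ = 2 * (Lam n).card ^ 4 := by ring
      _ = 4 * (Lam n).card ^ 4 := by ring
end
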